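/- arXiv:2511.11183 — 3 statements merged into one kernel-verified Lean document; each statement's English description precedes it below -/
import Mathlib

section
/- Let M, N ⊆ ℝⁿ be open sets and φ : M → N a diffeomorphism. If D is a discretization map on TM ≅ M × ℝⁿ, then D' := (φ × φ) ∘ D ∘ (Tφ)⁻¹ is a discretization map on TN, where Tφ(x,v) = (φ(x), Dφ(x)·v) is the tangent lift of φ. -/
theorem stmt_2 (n : ℕ) (M N : Set (Fin n → ℝ)) (hM : IsOpen M) (hN : IsOpen N)
    (φ ψ : (Fin n → ℝ) → (Fin n → ℝ))
    (hφ : ContDiffOn ℝ (⊤ : ℕ∞) φ M) (hψ : ContDiffOn ℝ (⊤ : ℕ∞) ψ N)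
    (hφN : Set.MapsTo φ M N) (hψM : Set.MapsTo ψ N M)
    (hlinv : ∀ x ∈ M, ψ (φ x) = x) (hrinv : ∀ z ∈ N, φ (ψ z) = z)
    (D : (Fin n → ℝ) × (Fin n → ℝ) → (Fin n → ℝ) × (Fin n → ℝ))
    (hDsmooth : ContDiff ℝ (⊤ : ℕ∞) D)
    (hDmem : ∀ x ∈ M, ∀ v : Fin n → ℝ, (D (x, v)).1 ∈ M ∧ (D (x, v)).2 ∈ M)
    (hD0 : ∀ x ∈ M, D (x, 0) = (x, x))
    (hDid : ∀ x ∈ M,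
      fderiv ℝ (fun v => (D (x, v)).2) 0 - fderiv ℝ (fun v => (D (x, v)).1) 0
        = ContinuousLinearMap.id ℝ (Fin n → ℝ))
    (D' : (Fin n → ℝ) × (Fin n → ℝ) → (Fin n → ℝ) × (Fin n → ℝ))
    (hD' : ∀ z w : Fin n → ℝ, D' (z, w) =
      (φ ((D (ψ z, fderiv ℝ ψ z w)).1), φ ((D (ψ z, fderiv ℝ ψ z w)).2))) :
    (∀ z ∈ N, D' (z, 0) = (z, z)) ∧
    (∀ z ∈ N,
      fderiv ℝ (fun w => (D' (z, w)).2) 0 - fderiv ℝ (fun w => (D' (z, w)).1) 0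
        = ContinuousLinearMap.id ℝ (Fin n → ℝ)) := by
  have hψd : ∀ z ∈ N, DifferentiableAt ℝ ψ z := fun z hz =>
    (hψ.differentiableOn (by simp)).differentiableAt (hN.mem_nhds hz)
  have hφd : ∀ x ∈ M, DifferentiableAt ℝ φ x := fun x hx =>
    (hφ.differentiableOn (by simp)).differentiableAt (hM.mem_nhds hx)
  have hDdiff : Differentiable ℝ D := hDsmooth.differentiable (by simp)
  constructor
  · intro z hz
    have hx : ψ z ∈ M := hψM hz
    rw [hD', (fderiv ℝ ψ z).map_zero, hD0 _ hx]
    simp [hrinv z hz]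
  · intro z hz
    have hx : ψ z ∈ M := hψM hz
    set x := ψ z with hxdef
    set A := fderiv ℝ ψ z with hA
    set L := fderiv ℝ φ x with hL
    -- differentiability of the two slice maps
    have hpair : ∀ v : Fin n → ℝ, DifferentiableAt ℝ (fun v => D (x, v)) v := by
      intro v
      exact (hDdiff (x, v)).comp v ((differentiableAt_const x).prodMk differentiableAt_id)
    have hf1d : DifferentiableAt ℝ (fun v => (D (x, v)).1) (0 : Fin n → ℝ) := (hpair 0).fst
    have hf2d : DifferentiableAt ℝ (fun v => (D (x, v)).2) (0 : Fin n → ℝ) := (hpair 0).snd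
    set F₁ := fderiv ℝ (fun v => (D (x, v)).1) 0 with hF1
    set F₂ := fderiv ℝ (fun v => (D (x, v)).2) 0 with hF2
    have hA0 : A 0 = 0 := A.map_zero
    have hD0x : D (x, 0) = (x, x) := hD0 _ hx
    have hφx : HasFDerivAt φ L x := (hφd x hx).hasFDerivAt
    -- derivative of w ↦ φ ((D (x, A w)).i) at 0
    have key : ∀ (f : (Fin n → ℝ) → (Fin n → ℝ)) (F : (Fin n → ℝ) →L[ℝ] (Fin n → ℝ)),
        HasFDerivAt f F 0 → f 0 = x →
        fderiv ℝ (fun w => φ (f (A w))) 0 = (L.comp F).comp A := by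
      intro f F hf hf0
      have hAd : HasFDerivAt A A 0 := A.hasFDerivAt
      have h1 : HasFDerivAt (fun w => f (A w)) (F.comp A) 0 :=
        HasFDerivAt.comp 0 (by rwa [hA0]) hAd
      have h2 : HasFDerivAt (fun w => φ (f (A w))) (L.comp (F.comp A)) 0 := by
        have hφ' : HasFDerivAt φ L ((fun w => f (A w)) 0) := by
          simpa [hA0, hf0] using hφx
        exact hφ'.comp 0 h1
      rw [h2.fderiv, ContinuousLinearMap.comp_assoc]
    have e1 : fderiv ℝ (fun w => (D' (z, w)).1) 0 = (L.comp F₁).comp A := by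
      have : (fun w => (D' (z, w)).1) = fun w => φ ((D (x, A w)).1) := by
        funext w; rw [hD' z w]
      rw [this]
      exact key _ F₁ hf1d.hasFDerivAt (by rw [hD0x])
    have e2 : fderiv ℝ (fun w => (D' (z, w)).2) 0 = (L.comp F₂).comp A := by
      have : (fun w => (D' (z, w)).2) = fun w => φ ((D (x, A w)).2) := by
        funext w; rw [hD' z w]
      rw [this]
      exact key _ F₂ hf2d.hasFDerivAt (by rw [hD0x])
    -- L ∘ A = id
    have hLA : L.comp A = ContinuousLinearMap.id ℝ (Fin n → ℝ) := by
      have hcomp : fderiv ℝ (φ ∘ ψ) z = L.comp A := fderiv_comp z (hφd x hx) (hψd z hz)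
      have heq : (φ ∘ ψ) =ᶠ[nhds z] id := by
        filter_upwards [hN.mem_nhds hz] with y hy
        exact hrinv y hy
      rw [heq.fderiv_eq, fderiv_id] at hcomp
      exact hcomp.symm
    have hsub : F₂ - F₁ = ContinuousLinearMap.id ℝ (Fin n → ℝ) := hDid x hx
    rw [e1, e2]
    have hcomb : (L.comp F₂).comp A - (L.comp F₁).comp A = (L.comp (F₂ - F₁)).comp A := by
      ext w
      simp [ContinuousLinearMap.sub_apply, map_sub]
    rw [hcomb, hsub, ContinuousLinearMap.comp_id, hLA]
end

section
/- Let D' be a discretization map on an open set N ⊆ ℝⁿ, φ : M → N a diffeomorphism, and D := (φ⁻¹ × φ⁻¹) ∘ D' ∘ Tφ the pulled-back discretization map on M. Suppose the continuous system ẋ = F(x,v) on M is transformed by z = φ(x) into the linear system ż = Az + Bv, i.e., Dφ(x)·F(x,v) = A φ(x) + B v for all x ∈ M, v. If the D'-discretization of the linear system gives z⁺ = A_h z + B_h v, then the D-discretization of ẋ = F(x,v) gives a map x⁺ = F_h(x,v) satisfying φ(F_h(x,v)) = A_h φ(x) + B_h v. In particular, the discretized nonlinear system is conjugate via φ to the linear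 discrete-time system z⁺ = A_h z + B_h v. -/
theorem stmt_6 (n m : ℕ) (hstep : ℝ)
    (M N : Set (Fin n → ℝ)) (hM : IsOpen M) (hN : IsOpen N)
    (φ ψ : (Fin n → ℝ) → (Fin n → ℝ))
    (hφ : ContDiffOn ℝ (⊤ : ℕ∞) φ M) (hψ : ContDiffOn ℝ (⊤ : ℕ∞) ψ N)
    (hφN : Set.MapsTo φ M N) (hψM : Set.MapsTo ψ N M)
    (hlinv : ∀ x ∈ M, ψ (φ x) = x) (hrinv : ∀ z ∈ N, φ (ψ z) = z)
    (D' : (Fin n → ℝ) × (Fin n → ℝ) → (Fin n → ℝ) × (Fin n → ℝ))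
    (hD'0 : ∀ z ∈ N, D' (z, 0) = (z, z))
    (hD'id : ∀ z ∈ N,
      fderiv ℝ (fun w => (D' (z, w)).2) 0 - fderiv ℝ (fun w => (D' (z, w)).1) 0
        = ContinuousLinearMap.id ℝ (Fin n → ℝ))
    (hD'mem : ∀ z ∈ N, ∀ w : Fin n → ℝ, (D' (z, w)).1 ∈ N ∧ (D' (z, w)).2 ∈ N)
    (F : (Fin n → ℝ) → (Fin m → ℝ) → (Fin n → ℝ))
    (A : Matrix (Fin n) (Fin n) ℝ) (B : Matrix (Fin n) (Fin m) ℝ)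
    (Ah : Matrix (Fin n) (Fin n) ℝ) (Bh : Matrix (Fin n) (Fin m) ℝ)
    (hlin : ∀ x ∈ M, ∀ v : Fin m → ℝ,
      fderiv ℝ φ x (F x v) = A.mulVec (φ x) + B.mulVec v)
    (hD'scheme : ∀ z ∈ N, ∀ (v : Fin m → ℝ) (zp : Fin n → ℝ),
      (∃ w ∈ N, D' (w, hstep • (A.mulVec w + B.mulVec v)) = (z, zp)) ↔
        zp = Ah.mulVec z + Bh.mulVec v)
    (D : (Fin n → ℝ) × (Fin n → ℝ) → (Fin n → ℝ) × (Fin n → ℝ))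
    (hD : ∀ (x ν : Fin n → ℝ), D (x, ν) =
      (ψ ((D' (φ x, fderiv ℝ φ x ν)).1), ψ ((D' (φ x, fderiv ℝ φ x ν)).2)))
    (Fh : (Fin n → ℝ) → (Fin m → ℝ) → (Fin n → ℝ))
    (hFh : ∀ x ∈ M, ∀ v : Fin m → ℝ, ∃ y ∈ M, D (y, hstep • F y v) = (x, Fh x v)) :
    ∀ x ∈ M, ∀ v : Fin m → ℝ, φ (Fh x v) = Ah.mulVec (φ x) + Bh.mulVec v := by
  intro x hx v
  obtain ⟨y, hy, hDy⟩ := hFh x hx v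
  rw [hD] at hDy
  have hder : fderiv ℝ φ y (hstep • F y v)
      = hstep • (A.mulVec (φ y) + B.mulVec v) := by
    rw [(fderiv ℝ φ y).map_smul, hlin y hy v]
  rw [hder] at hDy
  have hφyN : φ y ∈ N := hφN hy
  obtain ⟨h1N, h2N⟩ := hD'mem (φ y) hφyN (hstep • (A.mulVec (φ y) + B.mulVec v))
  have e1 : ψ (D' (φ y, hstep • (A.mulVec (φ y) + B.mulVec v))).1 = x :=
    congrArg Prod.fst hDy
  have e2 : ψ (D' (φ y, hstep • (A.mulVec (φ y) + B.mulVec v))).2 = Fh x v :=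
    congrArg Prod.snd hDy
  have w1 : (D' (φ y, hstep • (A.mulVec (φ y) + B.mulVec v))).1 = φ x := by
    rw [← e1, hrinv _ h1N]
  have w2 : (D' (φ y, hstep • (A.mulVec (φ y) + B.mulVec v))).2 = φ (Fh x v) := by
    rw [← e2, hrinv _ h2N]
  exact (hD'scheme (φ x) (hφN hx) v (φ (Fh x v))).mp
    ⟨φ y, hφyN, Prod.ext w1 w2⟩
end

section
/- Under the coordinate change z = Φ(x₁,x₂,x₃,x₄,y) = (x₁ − x₂², x₂, x₃ + x₄ y, x₄, (1+x₃)y), the vector field F(x,y,v) = (x₂ + 2x₂(x₃ + x₄ y), x₃ + x₄ y, ψ₁(x,y,v), (1+x₃)y, ψ₂(x,y,v)), where (ψ₁, ψ₂) is defined by the matrix equation [[1, x₄],[y, 1+x₃]]·(ψ₁, ψ₂)ᵀ = (v₁ − (1+x₃)y², v₂)ᵀ, is transformed into the linear vector field ż₁ = z₂, ż₂ = z₃, ż₃ = v₁, ż₄ = z₅, ż₅ = v₂. That is, DΦ(x,y)·F(x,y,v) = (z₂, z₃, v₁, z₅, v₂) with z = Φ(x,y), valid wherever 1 + x₃ − x₄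 y ≠ 0. -/
/-! Rows 1, 2 and 4 of `DΦ · F = (z₂, z₃, v₁, z₅, v₂)` hold identically in `(x, y)`; rows 3 and 5
are, after expanding the Jacobian, exactly the two feedback equations defining `(ψ₁, ψ₂)`. -/

def coordChange (q : Fin 5 → ℝ) : Fin 5 → ℝ :=
  ![q 0 - q 1 ^ 2, q 1, q 2 + q 3 * q 4, q 3, (1 + q 2) * q 4]

theorem differentiable_coordChange : Differentiable ℝ coordChange := by
  rw [differentiable_pi]
  intro i
  fin_cases i <;> simp [coordChange] <;> fun_prop

theorem fderiv_coordChange_apply (p w : Fin 5 → ℝ) :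
    fderiv ℝ coordChange p w =
      ![w 0 - 2 * p 1 * w 1, w 1, w 2 + p 4 * w 3 + p 3 * w 4, w 3,
        p 4 * w 2 + (1 + p 2) * w 4] := by
  have fderiv_coord (j : Fin 5) :
      fderiv ℝ (fun q : Fin 5 → ℝ => q j) p = ContinuousLinearMap.proj j :=
    (hasFDerivAt_apply j p).fderiv
  ext i
  rw [show fderiv ℝ coordChange p w i = fderiv ℝ (fun q => coordChange q i) p w by
    rw [fderiv_apply (differentiable_coordChange p)]; rfl]
  fin_cases i <;>
    simp (disch := fun_prop) [coordChange, fderiv_fun_sub, fderiv_fun_mul, fderiv_fun_add,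
      fderiv_fun_pow, fderiv_coord] <;>
    ring

theorem stmt_9_general (Φ : (Fin 5 → ℝ) → (Fin 5 → ℝ))
    (hΦ : ∀ p : Fin 5 → ℝ,
      Φ p = ![p 0 - (p 1) ^ 2, p 1, p 2 + p 3 * p 4, p 3, (1 + p 2) * p 4])
    (p : Fin 5 → ℝ) (v : Fin 2 → ℝ)
    (ψ₁ ψ₂ : ℝ)
    (hfeedback1 : ψ₁ + p 3 * ψ₂ = v 0 - (1 + p 2) * (p 4) ^ 2)
    (hfeedback2 : p 4 * ψ₁ + (1 + p 2) * ψ₂ = v 1) :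
    fderiv ℝ Φ p
      ![p 1 + 2 * p 1 * (p 2 + p 3 * p 4), p 2 + p 3 * p 4, ψ₁, (1 + p 2) * p 4, ψ₂]
      = ![Φ p 1, Φ p 2, v 0, Φ p 4, v 1] := by
  obtain rfl : Φ = coordChange := funext hΦ
  rw [fderiv_coordChange_apply]
  ext i
  fin_cases i <;> simp [coordChange]
  · linear_combination hfeedback1
  · linear_combination hfeedback2

theorem stmt_9 (Φ : (Fin 5 → ℝ) → (Fin 5 → ℝ))
    (hΦ : ∀ p : Fin 5 → ℝ,
      Φ p = ![p 0 - (p 1) ^ 2, p 1, p 2 + p 3 * p 4, p 3, (1 + p 2) * p 4])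
    (p : Fin 5 → ℝ) (v : Fin 2 → ℝ)
    (hd : 1 + p 2 - p 3 * p 4 ≠ 0)
    (ψ₁ ψ₂ : ℝ)
    (hfeedback1 : ψ₁ + p 3 * ψ₂ = v 0 - (1 + p 2) * (p 4) ^ 2)
    (hfeedback2 : p 4 * ψ₁ + (1 + p 2) * ψ₂ = v 1) :
    fderiv ℝ Φ p
      ![p 1 + 2 * p 1 * (p 2 + p 3 * p 4), p 2 + p 3 * p 4, ψ₁, (1 + p 2) * p 4, ψ₂]
      = ![Φ p 1, Φ p 2, v 0, Φ p 4, v 1] :=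
  stmt_9_general Φ hΦ p v ψ₁ ψ₂ hfeedback1 hfeedback2
end
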